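/- For all integers k ≥ 2 and l ≥ 0 with k − l ≠ 2 the following identity holds in F: Σ_{i=0}^{min(k,l)} (−1)^i · Λch(k−i)·S̄ch(l−i) = R·y^{k−3}·(x₁x₂x₃)^{−l}·a(l,l,0)/Π. (By exactness of the Koszul complex K_{k−l}, the left side telescopes to the character of the image Im d_{k,l} of the Koszul differential d_{k,l} : Λ_k⊗S_l* → Λ_{k+1}⊗S_{l+1}*; the right side is its closed form, formula (ctdt7) of the paper.) -/

import Mathlib

/-!
Write `T(k,l)` for the alternating sum. Splitting off its `i = 0` term gives
`T(k+1,l+1) = Λch(k+1)·S̄ch(l+1) − T(k,l)`, and `Λch(k) = y^{k−3}R` for `k ≥ 3`. So induction on `l`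
proves `T(k,l) = R·y^{k−3}·h̄_l` once the case `k = 2`, `l ≥ 1` is settled (`k − l ≠ 2` excludes
`k = 2`, `l = 0`). Two more steps reduce `T(2,n)` to the recurrence
`h̄_n − ē₁h̄_{n−1} + ē₂h̄_{n−2} − ē₃h̄_{n−3} = 0` (`n ≠ 0`, `ē_r = e_r(x⁻¹)`), which comes from
`(1 − ut)(1 − vt)(1 − wt)·Σ h_n t^n = 1`.

On the other side, `a(l,l,0) = (x₁x₂x₃)^l·a(0,0,−l)`. By linearity in the last column,
`n ↦ a(0,0,−n)` satisfies the same recurrence for every `n`. It agrees with `n ↦ Π·h̄_n` at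
`n = −2, −1, 0`, so `a(0,0,−l) = Π·h̄_l`.
-/


noncomputable section

/-- The field of rational functions over ℚ in four variables. -/
abbrev F : Type := FractionRing (MvPolynomial (Fin 4) ℚ)

def x1 : F := algebraMap (MvPolynomial (Fin 4) ℚ) F (MvPolynomial.X 0)
def x2 : F := algebraMap (MvPolynomial (Fin 4) ℚ) F (MvPolynomial.X 1)
def x3 : F := algebraMap (MvPolynomial (Fin 4) ℚ) F (MvPolynomial.X 2)
def y  : F := algebraMap (MvPolynomial (Fin 4) ℚ) F (MvPolynomial.X 3)

/-- `R = (x₁+y)(x₂+y)(x₃+y)`. -/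
def R : F := (x1 + y) * (x2 + y) * (x3 + y)

/-- `Π = (x₁−x₂)(x₂−x₃)(x₁−x₃)`. -/
def P : F := (x1 - x2) * (x2 - x3) * (x1 - x3)

/-- `a(t,u,v)` : determinant of the 3×3 matrix with `i`-th row `(xᵢ^{t+2}, xᵢ^{u+1}, xᵢ^v)`. -/
def a (t u v : ℤ) : F :=
  Matrix.det !![x1 ^ (t+2), x1 ^ (u+1), x1 ^ v;
                x2 ^ (t+2), x2 ^ (u+1), x2 ^ v;
                x3 ^ (t+2), x3 ^ (u+1), x3 ^ v]

/-- Complete homogeneous symmetric polynomial of degree `k` in three variables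
(`0` for `k < 0`). -/
def hc (u v w : F) (k : ℤ) : F :=
  if k < 0 then 0
  else ∑ i ∈ Finset.range (k.toNat + 1), ∑ j ∈ Finset.range (k.toNat - i + 1),
    u ^ i * v ^ j * w ^ (k.toNat - i - j)

def h (k : ℤ) : F := hc x1 x2 x3 k

def hbar (k : ℤ) : F := hc x1⁻¹ x2⁻¹ x3⁻¹ k

/-- Elementary symmetric polynomials in `x₁, x₂, x₃`. -/
def e : ℕ → F
  | 0 => 1
  | 1 => x1 + x2 + x3
  | 2 => x1*x2 + x1*x3 + x2*x3
  | 3 => x1*x2*x3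
  | _ => 0

/-- Character of the `j`-th super exterior power `Λ_j`. -/
def lamCh (j : ℕ) : F := ∑ r ∈ Finset.range (min 3 j + 1), e r * y ^ (j - r)

/-- Character of the dual `S_j*` of the `j`-th super symmetric power. -/
def sBarCh (j : ℕ) : F := hbar j + y⁻¹ * hbar ((j : ℤ) - 1)

/-- Schur polynomial: `s_μ · Π = det (xᵢ^{μⱼ+3−j})`. -/
def schur (m1 m2 m3 : ℤ) : F := a m1 m2 m3 / P

open Finset

section CompleteHomogeneous

variable (u v w : F)

lemma hc_of_neg {k : ℤ} (hk : k < 0) : hc u v w k = 0 := if_pos hk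

lemma hc_natCast (n : ℕ) :
    hc u v w n = ∑ i ∈ range (n + 1), ∑ j ∈ range (n - i + 1), u ^ i * v ^ j * w ^ (n - i - j) := by
  rw [hc, if_neg (by omega), Int.toNat_natCast]

lemma hc_zero : hc u v w 0 = 1 := by
  simpa using hc_natCast u v w 0

lemma hc_zero_left (n : ℕ) : hc 0 v w n = ∑ j ∈ range (n + 1), v ^ j * w ^ (n - j) := by
  simp [hc_natCast, sum_range_succ']

lemma hc_zero_mid (n : ℕ) : hc v 0 w n = ∑ i ∈ range (n + 1), v ^ i * w ^ (n - i) := by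
  simp [hc_natCast, sum_range_succ']

lemma hc_zero_left_eq_hc_zero_mid (n : ℤ) : hc 0 v w n = hc v 0 w n := by
  rcases lt_or_ge n 0 with hn | hn
  · rw [hc_of_neg _ _ _ hn, hc_of_neg _ _ _ hn]
  · lift n to ℕ using hn
    rw [hc_zero_left, hc_zero_mid]

lemma hc_zero_left_comm (n : ℤ) : hc 0 v w n = hc 0 w v n := by
  rcases lt_or_ge n 0 with hn | hn
  · rw [hc_of_neg _ _ _ hn, hc_of_neg _ _ _ hn]
  · lift n to ℕ using hn
    simpa only [hc_zero_left, Nat.add_sub_cancel] using geom_sum₂_comm v w (n + 1)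

lemma hc_zero_zero_zero (n : ℤ) : hc 0 0 0 n = if n = 0 then 1 else 0 := by
  rcases lt_or_ge n 0 with hn | hn
  · rw [hc_of_neg _ _ _ hn, if_neg hn.ne]
  · lift n to ℕ using hn
    rw [hc_zero_left]
    rcases n with _ | n
    · simp
    · simp [sum_range_succ']
      omega

lemma hc_sub_mul_hc_sub_one (n : ℤ) : hc u v w n - u * hc u v w (n - 1) = hc 0 v w n := by
  rcases lt_or_ge n 0 with hn | hn
  · rw [hc_of_neg _ _ _ hn, hc_of_neg _ _ _ hn, hc_of_neg _ _ _ (by omega)]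
    ring
  · lift n to ℕ using hn
    cases n with
    | zero => simp [hc_zero, hc_of_neg]
    | succ n =>
      rw [sub_eq_iff_eq_add', show ((n + 1 : ℕ) : ℤ) - 1 = n by push_cast; ring, hc_natCast,
        hc_natCast, hc_zero_left, sum_range_succ', mul_sum]
      simp only [Nat.add_sub_add_right, Nat.sub_zero, pow_zero, one_mul, mul_sum]
      congr 1
      refine sum_congr rfl fun i _ => sum_congr rfl fun j _ => ?_
      ring

lemma hc_recurrence (n : ℤ) :
    hc u v w n - (u + v + w) * hc u v w (n - 1) + (u * v + u * w + v * w) * hc u v w (n - 2)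
      - u * v * w * hc u v w (n - 3) = if n = 0 then 1 else 0 := by
  have peel_u (m : ℤ) := hc_sub_mul_hc_sub_one u v w m
  have peel_v (m : ℤ) : hc 0 v w m - v * hc 0 v w (m - 1) = hc 0 0 w m := by
    simpa only [← hc_zero_left_eq_hc_zero_mid] using hc_sub_mul_hc_sub_one v 0 w m
  have peel_w (m : ℤ) : hc 0 0 w m - w * hc 0 0 w (m - 1) = hc 0 0 0 m := by
    simpa only [← hc_zero_left_eq_hc_zero_mid, hc_zero_left_comm 0 w] using
      hc_sub_mul_hc_sub_one w 0 0 m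
  have shift₁ : n - 1 - 1 = n - 2 := by ring
  have shift₂ : n - 2 - 1 = n - 3 := by ring
  have u₁ := peel_u (n - 1)
  have u₂ := peel_u (n - 2)
  have v₁ := peel_v (n - 1)
  rw [shift₁] at u₁ v₁
  rw [shift₂] at u₂
  rw [← hc_zero_zero_zero]
  linear_combination peel_u n - (v + w) * u₁ + v * w * u₂ + peel_v n - w * v₁ + peel_w n

end CompleteHomogeneous

lemma algebraMap_X_ne_zero (i : Fin 4) :
    algebraMap (MvPolynomial (Fin 4) ℚ) F (MvPolynomial.X i) ≠ 0 :=
  (map_ne_zero_iff _ (IsFractionRing.injective _ _)).mpr (MvPolynomial.X_ne_zero i)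

lemma algebraMap_X_injective :
    Function.Injective fun i : Fin 4 => algebraMap (MvPolynomial (Fin 4) ℚ) F (MvPolynomial.X i) :=
  (IsFractionRing.injective _ F).comp MvPolynomial.X_injective

lemma x1_ne_zero : x1 ≠ 0 := algebraMap_X_ne_zero 0
lemma x2_ne_zero : x2 ≠ 0 := algebraMap_X_ne_zero 1
lemma x3_ne_zero : x3 ≠ 0 := algebraMap_X_ne_zero 2
lemma y_ne_zero : y ≠ 0 := algebraMap_X_ne_zero 3

lemma P_ne_zero : P ≠ 0 := by
  have h (i j : Fin 4) (hij : i ≠ j) := sub_ne_zero.mpr (algebraMap_X_injective.ne hij)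
  exact mul_ne_zero (mul_ne_zero (h 0 1 (by decide)) (h 1 2 (by decide))) (h 0 2 (by decide))

lemma a_expand (t u v : ℤ) :
    a t u v = x1 ^ (t + 2) * (x2 ^ (u + 1) * x3 ^ v - x2 ^ v * x3 ^ (u + 1))
      - x1 ^ (u + 1) * (x2 ^ (t + 2) * x3 ^ v - x2 ^ v * x3 ^ (t + 2))
      + x1 ^ v * (x2 ^ (t + 2) * x3 ^ (u + 1) - x2 ^ (u + 1) * x3 ^ (t + 2)) := by
  simp [a, Matrix.det_fin_three]
  ring

lemma a_add_shift (t u v m : ℤ) : a (t + m) (u + m) (v + m) = (x1 * x2 * x3) ^ m * a t u v := by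
  simp only [a_expand, mul_zpow, add_right_comm _ m, zpow_add₀ x1_ne_zero, zpow_add₀ x2_ne_zero,
    zpow_add₀ x3_ne_zero]
  ring

-- In the combined third column, row `i` is `xᵢ^v·(1 − xᵢ/x₁)(1 − xᵢ/x₂)(1 − xᵢ/x₃) = 0`.
lemma a_recurrence (v : ℤ) :
    a 0 0 v - (x1⁻¹ + x2⁻¹ + x3⁻¹) * a 0 0 (v + 1)
      + (x1⁻¹ * x2⁻¹ + x1⁻¹ * x3⁻¹ + x2⁻¹ * x3⁻¹) * a 0 0 (v + 2)
      - x1⁻¹ * x2⁻¹ * x3⁻¹ * a 0 0 (v + 3) = 0 := by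
  simp only [a_expand, zpow_add₀ x1_ne_zero, zpow_add₀ x2_ne_zero, zpow_add₀ x3_ne_zero]
  field_simp [x1_ne_zero, x2_ne_zero, x3_ne_zero]
  ring

lemma hbar_of_neg {k : ℤ} (hk : k < 0) : hbar k = 0 := hc_of_neg _ _ _ hk

lemma hbar_zero : hbar 0 = 1 := hc_zero _ _ _

lemma sBarCh_zero : sBarCh 0 = 1 := by
  simp [sBarCh, hbar_zero, hbar_of_neg]

lemma hbar_recurrence {n : ℤ} (hn : n ≠ 0) :
    hbar n - (x1⁻¹ + x2⁻¹ + x3⁻¹) * hbar (n - 1)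
      + (x1⁻¹ * x2⁻¹ + x1⁻¹ * x3⁻¹ + x2⁻¹ * x3⁻¹) * hbar (n - 2)
      - x1⁻¹ * x2⁻¹ * x3⁻¹ * hbar (n - 3) = 0 :=
  (hc_recurrence _ _ _ n).trans (if_neg hn)

lemma P_mul_hbar (n : ℕ) : P * hbar n = a 0 0 (-n) := by
  let E : LinearRecurrence F :=
    ⟨3, ![x1⁻¹ * x2⁻¹ * x3⁻¹, -(x1⁻¹ * x2⁻¹ + x1⁻¹ * x3⁻¹ + x2⁻¹ * x3⁻¹), x1⁻¹ + x2⁻¹ + x3⁻¹]⟩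
  have hsol : E.IsSolution fun m => P * hbar ((m : ℤ) - 2) := by
    intro m
    have := hbar_recurrence (n := (m : ℤ) + 1) (by omega)
    simp only [E, Fin.sum_univ_three, Matrix.cons_val_zero, Matrix.cons_val_one,
      Matrix.cons_val_two, Matrix.head_cons, Matrix.tail_cons, Fin.val_zero, Fin.val_one,
      Fin.val_two]
    push_cast
    ring_nf at this ⊢
    linear_combination P * this
  have asol : E.IsSolution fun m => a 0 0 (2 - m) := by
    intro m
    have := a_recurrence (-1 - m)
    simp only [E, Fin.sum_univ_three, Matrix.cons_val_zero, Matrix.cons_val_one,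
      Matrix.cons_val_two, Matrix.head_cons, Matrix.tail_cons, Fin.val_zero, Fin.val_one,
      Fin.val_two]
    push_cast
    ring_nf at this ⊢
    linear_combination this
  have := (E.eq_iff_eqOn_range_order _ _ hsol asol).mpr ?_
  · simpa using congrFun this (n + 2)
  intro m hm
  simp only [E, coe_range, Set.mem_Iio] at hm
  interval_cases m
  all_goals simp [hbar_of_neg, hbar_zero, a_expand, P]
  all_goals ring

lemma a_eq_pow_mul_P_mul_hbar (l : ℕ) : a l l 0 = (x1 * x2 * x3) ^ l * (P * hbar l) := by
  simpa [P_mul_hbar] using a_add_shift 0 0 (-l) l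

section KoszulSum

variable {α : Type*} [CommRing α] (f g : ℕ → α)

def koszulSum (k l : ℕ) : α := ∑ i ∈ range (min k l + 1), (-1) ^ i * f (k - i) * g (l - i)

lemma koszulSum_zero_left (l : ℕ) : koszulSum f g 0 l = f 0 * g l := by
  simp [koszulSum]

lemma koszulSum_zero_right (k : ℕ) : koszulSum f g k 0 = f k * g 0 := by
  simp [koszulSum]

lemma koszulSum_succ_succ (k l : ℕ) :
    koszulSum f g (k + 1) (l + 1) = f (k + 1) * g (l + 1) - koszulSum f g k l := by
  rw [koszulSum, koszulSum, Nat.succ_min_succ, sum_range_succ', add_comm, sub_eq_add_neg,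
    ← sum_neg_distrib]
  simp only [Nat.add_sub_add_right, pow_succ, pow_zero, one_mul, Nat.sub_zero]
  congr 1
  exact sum_congr rfl fun i _ => by ring

end KoszulSum

lemma lamCh_zero : lamCh 0 = 1 := by simp [lamCh, e]

lemma lamCh_one : lamCh 1 = y + (x1 + x2 + x3) := by simp [lamCh, e, sum_range_succ]

lemma lamCh_two : lamCh 2 = y ^ 2 + (x1 + x2 + x3) * y + (x1 * x2 + x1 * x3 + x2 * x3) := by
  simp [lamCh, e, sum_range_succ]

lemma lamCh_add_three (m : ℕ) : lamCh (m + 3) = y ^ m * R := by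
  simp [lamCh, e, sum_range_succ, R]
  ring

lemma koszulSum_lamCh_sBarCh_two (n : ℕ) :
    koszulSum lamCh sBarCh 2 (n + 1) = R * y⁻¹ * hbar (n + 1) := by
  have hS (j : ℕ) : sBarCh j = hbar j + y⁻¹ * hbar (j - 1) := rfl
  have tail : koszulSum lamCh sBarCh 1 n =
      lamCh 1 * sBarCh n - (hbar (n - 1) + y⁻¹ * hbar (n - 2)) := by
    rcases n with _ | n
    · simp [koszulSum_zero_right, hbar_of_neg]
    · rw [koszulSum_succ_succ, koszulSum_zero_left, lamCh_zero, one_mul]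
      simp only [hS]
      push_cast
      ring_nf
  have hrec := hbar_recurrence (n := n + 1) (by omega)
  rw [koszulSum_succ_succ, tail, lamCh_two, lamCh_one, R]
  simp only [hS]
  push_cast
  ring_nf at hrec ⊢
  -- multiplied by `y`, the difference of the two sides is `x₁x₂x₃` times the recurrence
  field_simp [y_ne_zero, x1_ne_zero, x2_ne_zero, x3_ne_zero] at hrec ⊢
  linear_combination -hrec

lemma koszulSum_lamCh_sBarCh (l : ℕ) : ∀ k : ℕ, 2 ≤ k → (k : ℤ) - l ≠ 2 →
    koszulSum lamCh sBarCh k l = R * y ^ ((k : ℤ) - 3) * hbar l := by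
  induction l with
  | zero =>
    intro k hk hkl
    obtain ⟨m, rfl⟩ : ∃ m, k = m + 3 := ⟨k - 3, by omega⟩
    rw [koszulSum_zero_right, lamCh_add_three, sBarCh_zero, Nat.cast_zero, hbar_zero,
      show ((m + 3 : ℕ) : ℤ) - 3 = m by push_cast; ring, zpow_natCast]
    ring
  | succ l ih =>
    intro k hk hkl
    obtain rfl | ⟨m, rfl⟩ : k = 2 ∨ ∃ m, k = m + 3 := by
      rcases eq_or_lt_of_le hk with h | h
      · exact .inl h.symm
      · exact .inr ⟨k - 3, by omega⟩
    · simpa using koszulSum_lamCh_sBarCh_two l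
    · rw [koszulSum_succ_succ, ih (m + 2) (by omega) (by push_cast at hkl ⊢; omega),
        lamCh_add_three, sBarCh, show ((m + 2 : ℕ) : ℤ) - 3 = m - 1 by push_cast; ring,
        show ((m + 3 : ℕ) : ℤ) - 3 = m by push_cast; ring, zpow_sub_one₀ y_ne_zero, zpow_natCast]
      push_cast
      rw [add_sub_cancel_right]
      ring

/-- Telescoping character formula for `Im d_{k,l}` along the exact Koszul complex
`K_{k−l}` (`k ≥ 2`, `l ≥ 0`, `k−l ≠ 2`):
`Σ_{i=0}^{min(k,l)} (−1)^i Λch(k−i)·S̄ch(l−i) = R·y^{k−3}·(x₁x₂x₃)^{−l}·a(l,l,0)/Π`. -/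
theorem stmt_10 (k l : ℕ) (hk : 2 ≤ k) (hkl : (k : ℤ) - l ≠ 2) :
    (∑ i ∈ Finset.range (min k l + 1), (-1 : F) ^ i * lamCh (k - i) * sBarCh (l - i))
    = R * y ^ ((k : ℤ) - 3) * (x1*x2*x3) ^ (-(l : ℤ)) * a l l 0 / P := by
  rw [← koszulSum, koszulSum_lamCh_sBarCh l k hk hkl, a_eq_pow_mul_P_mul_hbar, zpow_neg,
    zpow_natCast]
  field_simp [P_ne_zero, x1_ne_zero, x2_ne_zero, x3_ne_zero]
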